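/- Let δ and δ̄ be two equivalent families as in the context, with P_ε^x(u) = (δ_ε^x)⁻¹(δ̄_ε^x(u)) → P^x(u) and Q_ε^x(u) = (δ̄_ε^x)⁻¹(δ_ε^x(u)) → Q^x(u) uniformly on compact sets, and suppose the induced sum operations converge uniformly on compact sets: Σ_ε^x(u,v) → Σ^x(u,v) and Σ̄_ε^x(u,v) → Σ̄^x(u,v), with Q^x continuous. Then for all x, u, v ∈ X: Σ̄^x(u, v) = Q^x( Σ^x( P^x(u), P^x(v) ) ). -/

import Mathlib

/-!
For every `ε > 0` there is an exact identity between the approximants,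
`Σ̄_ε^x(u, v) = Q_ε^x(Σ_ε^x(P_ε^x u, P_ε^y v))` with `y = δ̄_ε^x u`,
obtained by cancelling `δ_ε^z ∘ δ_{1/ε}^z`. The approximants are continuous and converge
uniformly on compact sets, i.e. locally uniformly since `X` is locally compact, so their limits
are continuous and one may pass to the limit along moving arguments. As `y → x`, the right-hand
side tends to `Q^x(Σ^x(P^x u, P^x v))` and the left-hand side to `Σ̄^x(u, v)`.
-/

open Filter Topology

section Approximants

variable {X : Type*} {δ δ' : ℝ → X → X → X}

/-- `Σ_ε^x(u, v)` in the paper's notation. -/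
noncomputable def approxSum (δ : ℝ → X → X → X) (ε : ℝ) (x u v : X) : X :=
  δ ε⁻¹ x (δ ε (δ ε x u) v)

/-- `(δ_ε^x)⁻¹ (δ'_ε^x u)`: this is `P_ε^x u` for `(δ, δ')` and `Q_ε^x u` for `(δ', δ)`. -/
noncomputable def approxTransfer (δ δ' : ℝ → X → X → X) (ε : ℝ) (x u : X) : X :=
  δ ε⁻¹ x (δ' ε x u)

lemma dilation_dilation_inv
    (hcomp : ∀ ε μ : ℝ, 0 < ε → 0 < μ → ∀ x y : X, δ ε x (δ μ x y) = δ (ε * μ) x y)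
    (hone : ∀ x y : X, δ 1 x y = y) {ε : ℝ} (hε : 0 < ε) (z w : X) :
    δ ε z (δ ε⁻¹ z w) = w := by
  rw [hcomp ε ε⁻¹ hε (inv_pos.mpr hε), mul_inv_cancel₀ hε.ne', hone]

lemma approxSum_eq_approxTransfer_approxSum
    (hcomp : ∀ ε μ : ℝ, 0 < ε → 0 < μ → ∀ x y : X, δ ε x (δ μ x y) = δ (ε * μ) x y)
    (hone : ∀ x y : X, δ 1 x y = y) {ε : ℝ} (hε : 0 < ε) (x u v : X) :
    approxSum δ' ε x u v =
      approxTransfer δ' δ ε x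
        (approxSum δ ε x (approxTransfer δ δ' ε x u) (approxTransfer δ δ' ε (δ' ε x u) v)) := by
  simp only [approxSum, approxTransfer, dilation_dilation_inv hcomp hone hε]

variable [TopologicalSpace X]

lemma continuous_dilation_of_continuousOn
    (hcont : ContinuousOn (fun p : ℝ × X × X => δ p.1 p.2.1 p.2.2) {p | 0 < p.1})
    {ε : ℝ} (hε : 0 < ε) : Continuous fun p : X × X => δ ε p.1 p.2 :=
  hcont.comp_continuous (continuous_const.prodMk continuous_id) fun _ => hε

lemma continuous_approxTransfer
    (hcont : ContinuousOn (fun p : ℝ × X × X => δ p.1 p.2.1 p.2.2) {p | 0 < p.1})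
    (hcont' : ContinuousOn (fun p : ℝ × X × X => δ' p.1 p.2.1 p.2.2) {p | 0 < p.1})
    {ε : ℝ} (hε : 0 < ε) : Continuous fun p : X × X => approxTransfer δ δ' ε p.1 p.2 :=
  (continuous_dilation_of_continuousOn hcont (inv_pos.mpr hε)).comp
    (continuous_fst.prodMk (continuous_dilation_of_continuousOn hcont' hε))

lemma continuous_approxSum
    (hcont : ContinuousOn (fun p : ℝ × X × X => δ p.1 p.2.1 p.2.2) {p | 0 < p.1})
    {ε : ℝ} (hε : 0 < ε) : Continuous fun p : X × X × X => approxSum δ ε p.1 p.2.1 p.2.2 := by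
  have hδ := continuous_dilation_of_continuousOn hcont hε
  have hδinv := continuous_dilation_of_continuousOn hcont (inv_pos.mpr hε)
  have hinner : Continuous fun p : X × X × X => δ ε (δ ε p.1 p.2.1) p.2.2 :=
    hδ.comp ((hδ.comp (continuous_fst.prodMk continuous_snd.fst)).prodMk continuous_snd.snd)
  exact hδinv.comp (continuous_fst.prodMk hinner)

end Approximants

lemma TendstoLocallyUniformly.tendsto_comp_of_eventually_continuous
    {α β ι : Type*} [TopologicalSpace α] [UniformSpace β] {p : Filter ι} [p.NeBot]
    {F : ι → α → β} {f : α → β} {g : ι → α} {a : α} (h : TendstoLocallyUniformly F f p)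
    (hF : ∀ᶠ n in p, Continuous (F n)) (hg : Tendsto g p (𝓝 a)) :
    Tendsto (fun n => F n (g n)) p (𝓝 (f a)) :=
  h.tendsto_comp (h.continuous hF.frequently).continuousAt hg

section Limits

variable {X : Type*} [UniformSpace X] [LocallyCompactSpace X] {δ δ' : ℝ → X → X → X}

lemma tendsto_approxTransfer
    (hcont : ContinuousOn (fun p : ℝ × X × X => δ p.1 p.2.1 p.2.2) {p | 0 < p.1})
    (hcont' : ContinuousOn (fun p : ℝ × X × X => δ' p.1 p.2.1 p.2.2) {p | 0 < p.1})
    {P : X → X → X}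
    (hP : ∀ K : Set (X × X), IsCompact K →
      TendstoUniformlyOn (fun (ε : ℝ) (p : X × X) => approxTransfer δ δ' ε p.1 p.2)
        (fun p => P p.1 p.2) (𝓝[>] (0 : ℝ)) K)
    {g : ℝ → X × X} {a : X × X} (hg : Tendsto g (𝓝[>] 0) (𝓝 a)) :
    Tendsto (fun ε => approxTransfer δ δ' ε (g ε).1 (g ε).2) (𝓝[>] 0) (𝓝 (P a.1 a.2)) :=
  (tendstoLocallyUniformly_iff_forall_isCompact.mpr hP).tendsto_comp_of_eventually_continuous
    (eventually_mem_nhdsWithin.mono fun _ hε => continuous_approxTransfer hcont hcont' hε) hg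

lemma tendsto_approxSum
    (hcont : ContinuousOn (fun p : ℝ × X × X => δ p.1 p.2.1 p.2.2) {p | 0 < p.1})
    {S : X → X → X → X}
    (hS : ∀ K : Set (X × X × X), IsCompact K →
      TendstoUniformlyOn (fun (ε : ℝ) (p : X × X × X) => approxSum δ ε p.1 p.2.1 p.2.2)
        (fun p => S p.1 p.2.1 p.2.2) (𝓝[>] (0 : ℝ)) K)
    {g : ℝ → X × X × X} {a : X × X × X} (hg : Tendsto g (𝓝[>] 0) (𝓝 a)) :
    Tendsto (fun ε => approxSum δ ε (g ε).1 (g ε).2.1 (g ε).2.2) (𝓝[>] 0)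
      (𝓝 (S a.1 a.2.1 a.2.2)) :=
  (tendstoLocallyUniformly_iff_forall_isCompact.mpr hS).tendsto_comp_of_eventually_continuous
    (eventually_mem_nhdsWithin.mono fun _ hε => continuous_approxSum hcont hε) hg

end Limits

theorem equivalent_tangent_bundles_isomorphic_general
    {X : Type*} [MetricSpace X] [LocallyCompactSpace X]
    (δ δ' : ℝ → X → X → X)
    (hcomp : ∀ ε μ : ℝ, 0 < ε → 0 < μ → ∀ x y : X, δ ε x (δ μ x y) = δ (ε * μ) x y)
    (hone : ∀ x y : X, δ 1 x y = y)
    (hcont : ContinuousOn (fun p : ℝ × X × X => δ p.1 p.2.1 p.2.2) {p | 0 < p.1})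
    (hcont' : ContinuousOn (fun p : ℝ × X × X => δ' p.1 p.2.1 p.2.2) {p | 0 < p.1})
    (hlim0' : ∀ x y : X, Tendsto (fun ε : ℝ => δ' ε x y) (𝓝[>] (0 : ℝ)) (𝓝 x))
    (P Q : X → X → X)
    (hP : ∀ K : Set (X × X), IsCompact K →
      TendstoUniformlyOn (fun (ε : ℝ) (p : X × X) => δ ε⁻¹ p.1 (δ' ε p.1 p.2))
        (fun p => P p.1 p.2) (𝓝[>] (0 : ℝ)) K)
    (hQ : ∀ K : Set (X × X), IsCompact K →
      TendstoUniformlyOn (fun (ε : ℝ) (p : X × X) => δ' ε⁻¹ p.1 (δ ε p.1 p.2))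
        (fun p => Q p.1 p.2) (𝓝[>] (0 : ℝ)) K)
    (SigL SigL' : X → X → X → X)
    (hSig : ∀ K : Set (X × X × X), IsCompact K →
      TendstoUniformlyOn
        (fun (ε : ℝ) (p : X × X × X) => δ ε⁻¹ p.1 (δ ε (δ ε p.1 p.2.1) p.2.2))
        (fun p => SigL p.1 p.2.1 p.2.2) (𝓝[>] (0 : ℝ)) K)
    (hSig' : ∀ K : Set (X × X × X), IsCompact K →
      TendstoUniformlyOn
        (fun (ε : ℝ) (p : X × X × X) => δ' ε⁻¹ p.1 (δ' ε (δ' ε p.1 p.2.1) p.2.2))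
        (fun p => SigL' p.1 p.2.1 p.2.2) (𝓝[>] (0 : ℝ)) K) :
    ∀ x u v : X, SigL' x u v = Q x (SigL x (P x u) (P x v)) := by
  intro x u v
  have hPu := tendsto_approxTransfer hcont hcont' hP (tendsto_const_nhds (x := (x, u)))
  have hPv := tendsto_approxTransfer hcont hcont' hP
    ((hlim0' x u).prodMk_nhds (tendsto_const_nhds (x := v)))
  have hSum := tendsto_approxSum hcont hSig
    (tendsto_const_nhds (x := x) |>.prodMk_nhds (hPu.prodMk_nhds hPv))
  have hRHS := tendsto_approxTransfer hcont' hcont hQ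
    (tendsto_const_nhds (x := x) |>.prodMk_nhds hSum)
  have hLHS := tendsto_approxSum hcont' hSig' (tendsto_const_nhds (x := (x, u, v)))
  refine tendsto_nhds_unique (hLHS.congr' ?_) hRHS
  filter_upwards [self_mem_nhdsWithin] with ε hε
  exact approxSum_eq_approxTransfer_approxSum hcomp hone hε x u v

/-- Let `δ` and `δ'` (written `δ̄` in the text) be two equivalent
families of dilatations on `X`, with `P_ε^x → P^x` and `Q_ε^x → Q^x` uniformly on
compact sets, and suppose the sum operations converge uniformly on compact sets:
`Σ_ε^x → Σ^x`, `Σ̄_ε^x → Σ̄^x`, with each `Q^x` continuous. Then for all `x, u, v`: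
`Σ̄^x(u, v) = Q^x( Σ^x( P^x(u), P^x(v) ) )`. -/
theorem equivalent_tangent_bundles_isomorphic
    {X : Type*} [MetricSpace X] [CompleteSpace X] [LocallyCompactSpace X]
    (δ δ' : ℝ → X → X → X)
    (hcomp : ∀ ε μ : ℝ, 0 < ε → 0 < μ → ∀ x y : X, δ ε x (δ μ x y) = δ (ε * μ) x y)
    (hone : ∀ x y : X, δ 1 x y = y)
    (hfix : ∀ ε : ℝ, 0 < ε → ∀ x : X, δ ε x x = x)
    (hcont : ContinuousOn (fun p : ℝ × X × X => δ p.1 p.2.1 p.2.2) {p | 0 < p.1})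
    (hlim0 : ∀ x y : X, Tendsto (fun ε : ℝ => δ ε x y) (𝓝[>] (0 : ℝ)) (𝓝 x))
    (hcomp' : ∀ ε μ : ℝ, 0 < ε → 0 < μ → ∀ x y : X, δ' ε x (δ' μ x y) = δ' (ε * μ) x y)
    (hone' : ∀ x y : X, δ' 1 x y = y)
    (hfix' : ∀ ε : ℝ, 0 < ε → ∀ x : X, δ' ε x x = x)
    (hcont' : ContinuousOn (fun p : ℝ × X × X => δ' p.1 p.2.1 p.2.2) {p | 0 < p.1})
    (hlim0' : ∀ x y : X, Tendsto (fun ε : ℝ => δ' ε x y) (𝓝[>] (0 : ℝ)) (𝓝 x))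
    (P Q : X → X → X)
    (hP : ∀ K : Set (X × X), IsCompact K →
      TendstoUniformlyOn (fun (ε : ℝ) (p : X × X) => δ ε⁻¹ p.1 (δ' ε p.1 p.2))
        (fun p => P p.1 p.2) (𝓝[>] (0 : ℝ)) K)
    (hQ : ∀ K : Set (X × X), IsCompact K →
      TendstoUniformlyOn (fun (ε : ℝ) (p : X × X) => δ' ε⁻¹ p.1 (δ ε p.1 p.2))
        (fun p => Q p.1 p.2) (𝓝[>] (0 : ℝ)) K)
    (SigL SigL' : X → X → X → X)
    (hSig : ∀ K : Set (X × X × X), IsCompact K →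
      TendstoUniformlyOn
        (fun (ε : ℝ) (p : X × X × X) => δ ε⁻¹ p.1 (δ ε (δ ε p.1 p.2.1) p.2.2))
        (fun p => SigL p.1 p.2.1 p.2.2) (𝓝[>] (0 : ℝ)) K)
    (hSig' : ∀ K : Set (X × X × X), IsCompact K →
      TendstoUniformlyOn
        (fun (ε : ℝ) (p : X × X × X) => δ' ε⁻¹ p.1 (δ' ε (δ' ε p.1 p.2.1) p.2.2))
        (fun p => SigL' p.1 p.2.1 p.2.2) (𝓝[>] (0 : ℝ)) K)
    (hQcont : ∀ x : X, Continuous (Q x)) :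
    ∀ x u v : X, SigL' x u v = Q x (SigL x (P x u) (P x v)) :=
  equivalent_tangent_bundles_isomorphic_general δ δ' hcomp hone hcont hcont' hlim0' P Q hP hQ SigL
    SigL' hSig hSig'
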